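/- For the two-site model, the following Lie derivative identities hold at every point of X₊ and for i = 1, 2: L_{g_i} h_e = 0, L_{g_i} L_f h_e = 0, L_{g_i} L_f² h_e = 0, L_{g_i} L_f³ h_e = 0, and L_{g_i} h_h = 0, L_{g_i} L_f h_h = 0, L_{g_i} L_f² h_h = 0. (These identities are the first part of the claim in Lemma 2 that the model has vector relative degree {5, 4} with respect to the outputs (h_e, h_h).) -/

import Mathlib

/-!
The input fields `g_1`, `g_2` are the constant fields along `x_g1` and `x_g4`, so `L_{g_i} φ`
vanishes identically as soon as `φ` does not depend on that variable (where `φ` is not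
differentiable the Fréchet derivative is `0` anyway, so no smoothness is needed). If `φ` depends
only on the variables in `s`, then `L_f φ` depends only on `s` together with the variables that
the components `f_i`, `i ∈ s`, depend on. Starting from `{x_e1, x_e3}` for `h_e`, three such
steps reach only `x_g2, x_g3, x_g5, x_g6, x_e1, …, x_e4`; starting from `{x_h2}` for `h_h`, two
steps reach only `x_g2, x_g5, x_h1, x_h2`. Neither ever reaches `x_g1` or `x_g4`.
-/

noncomputable section

/-- Parameters of the two-site electricity and heat supply model, together
with the sign conditions assumed in the paper. -/
structure Params where
  (Tv1 Tf1 TCD1 Tv2 Tf2 TCD2 : ℝ)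
  (Te1 Te2 D1 D2 : ℝ)
  (Ke1 Ke2 Kh1 Kh2 : ℝ)
  (Th1 Th2 Th3 : ℝ)
  (rhos lam len dia hc : ℝ)
  (E1 E2 Einf : ℝ)
  (B10 B20 B12 : ℝ)
  (G10 G20 G12 : ℝ)
  (beta1 beta2 : ℝ)
  (Wo1 Wo2 : ℝ)
  (QL1 QL2 : ℝ)
  hTv1 : 0 < Tv1
  hTf1 : 0 < Tf1
  hTCD1 : 0 < TCD1
  hTv2 : 0 < Tv2
  hTf2 : 0 < Tf2
  hTCD2 : 0 < TCD2
  hTe1 : 0 < Te1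
  hTe2 : 0 < Te2
  hD1 : 0 < D1
  hD2 : 0 < D2
  hKe1 : 0 < Ke1
  hKe2 : 0 < Ke2
  hKh1 : 0 < Kh1
  hKh2 : 0 < Kh2
  hTh1 : 0 < Th1
  hTh2 : 0 < Th2
  hTh3 : 0 < Th3
  hrhos : 0 < rhos
  hlam : 0 < lam
  hlen : 0 < len
  hdia : 0 < dia
  hhc : 0 < hc
  hE1 : 0 < E1
  hE2 : 0 < E2
  hEinf : 0 < Einf
  hB10 : 0 < B10
  hB20 : 0 < B20
  hB12 : 0 < B12
  hG10 : 0 ≤ G10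
  hG20 : 0 ≤ G20
  hG12 : 0 ≤ G12
  hbeta1 : 0 ≤ beta1
  hbeta2 : 0 ≤ beta2
  hWo1 : Wo1 ∈ Set.Ioo (0 : ℝ) 1
  hWo2 : Wo2 ∈ Set.Ioo (0 : ℝ) 1

/-- The state space of the two-site model: `x = (x_g1,…,x_g6, x_e1,…,x_e4,
x_h1, x_h2, x_h3) ∈ ℝ¹³`.  Index convention: `x i` for `i = 0,…,5` are the gas
turbine variables `x_g1,…,x_g6`; `x 6, x 7, x 8, x 9` are `x_e1, x_e2, x_e3,
x_e4`; `x 10, x 11, x 12` are `x_h1, x_h2, x_h3`. -/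
abbrev St : Type := Fin 13 → ℝ

namespace Params

variable (p : Params)

/-- `c = (π/4)·h_c·ρ_s`. -/
def cc : ℝ := (Real.pi / 4) * p.hc * p.rhos

/-- Mechanical power of turbine 1. -/
def Pm1 (x : St) : ℝ := p.Ke1 * (x 2 - p.Wo1) / (1 - p.Wo1)

/-- Mechanical power of turbine 2. -/
def Pm2 (x : St) : ℝ := p.Ke2 * (x 5 - p.Wo2) / (1 - p.Wo2)

/-- Electric output power of generator 1. -/
def Pe1 (x : St) : ℝ :=
  p.E1 * p.Einf * (p.G10 * Real.cos (x 6) + p.B10 * Real.sin (x 6))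
    + p.E1 * p.E2 * (p.G12 * Real.cos (x 6 - x 8) + p.B12 * Real.sin (x 6 - x 8))

/-- Electric output power of generator 2. -/
def Pe2 (x : St) : ℝ :=
  p.E2 * p.Einf * (p.G20 * Real.cos (x 8) + p.B20 * Real.sin (x 8))
    + p.E2 * p.E1 * (p.G12 * Real.cos (x 8 - x 6) + p.B12 * Real.sin (x 8 - x 6))

/-- Heat output of recovery boiler 1. -/
def Qa1 (x : St) : ℝ := p.Kh1 * (x 1 + p.beta1) / (1 + p.beta1)

/-- Heat output of recovery boiler 2. -/
def Qa2 (x : St) : ℝ := p.Kh2 * (x 4 + p.beta2) / (1 + p.beta2)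

/-- The drift vector field `f` of the two-site model. -/
def drift (x : St) : St :=
  ![ (-x 0 + p.Wo1) / p.Tv1,
     (-x 1 + x 0) / p.Tf1,
     (-x 2 + x 1) / p.TCD1,
     (-x 3 + p.Wo2) / p.Tv2,
     (-x 4 + x 3) / p.Tf2,
     (-x 5 + x 4) / p.TCD2,
     x 7 / p.Te1,
     (p.Pm1 x - p.D1 * x 7 - p.Pe1 x) / p.Te1,
     x 9 / p.Te2,
     (p.Pm2 x - p.D2 * x 9 - p.Pe2 x) / p.Te2,
     (p.Qa1 x - p.QL1 - p.cc * x 11) / p.Th1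
       - (p.Qa2 x - p.QL2 + p.cc * x 11) / p.Th2,
     (x 10 / p.rhos - (p.lam * p.len / (2 * p.dia)) * x 11 * |x 11|) / p.Th3,
     p.Qa1 x - p.QL1 + p.Qa2 x - p.QL2 ]

/-- The input vector field `g_1`. -/
def g1 : St → St := fun _ => Pi.single 0 ((1 - p.Wo1) / p.Tv1)

/-- The input vector field `g_2`. -/
def g2 : St → St := fun _ => Pi.single 3 ((1 - p.Wo2) / p.Tv2)

/-- The output `h_e`: electric power to the infinite bus. -/
def hE (x : St) : ℝ :=
  p.E1 * p.Einf * (p.B10 * Real.sin (x 6) - p.G10 * Real.cos (x 6))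
    + p.E2 * p.Einf * (p.B20 * Real.sin (x 8) - p.G20 * Real.cos (x 8))

/-- The output `h_h`: heat flow rate through the pipe. -/
def hH (x : St) : ℝ := p.cc * x 11

end Params

/-- Lie derivative `L_v h (x) = Dh(x)·v(x)` of a function along a vector
field. -/
def lie (v : St → St) (h : St → ℝ) (x : St) : ℝ := fderiv ℝ h x (v x)

/-- Iterated Lie derivative `L_v^k h`. -/
def lieIt (v : St → St) : ℕ → (St → ℝ) → (St → ℝ)
  | 0, h => h
  | n + 1, h => lie v (lieIt v n h)

/-- The open set `X₊ = { x : x_h2 > 0 }` on which the drift is smooth. -/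
def Xplus : Set St := { x : St | 0 < x 11 }

section FDeriv

variable {𝕜 : Type*} [NontriviallyNormedField 𝕜] {E F : Type*} [NormedAddCommGroup E]
  [NormedSpace 𝕜 E] [NormedAddCommGroup F] [NormedSpace 𝕜 F] {f : E → F}

theorem fderiv_apply_eq_zero_of_forall_add_smul {x v : E} (h : ∀ t : 𝕜, f (x + t • v) = f x) :
    fderiv 𝕜 f x v = 0 := by
  by_cases hf : DifferentiableAt 𝕜 f x
  · rw [← hf.lineDeriv_eq_fderiv, lineDeriv]
    simp_rw [h]
    exact deriv_const _ _
  · rw [fderiv_zero_of_not_differentiableAt hf]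
    rfl

theorem fderiv_add_eq_of_forall_add {a : E} (h : ∀ u, f (u + a) = f u) (x : E) :
    fderiv 𝕜 f (x + a) = fderiv 𝕜 f x := by
  rw [← fderiv_comp_add_right]
  simp_rw [h]

end FDeriv

namespace DependsOn

variable {𝕜 : Type*} [NontriviallyNormedField 𝕜] {ι : Type*} [Fintype ι] {F : Type*}
  [NormedAddCommGroup F] [NormedSpace 𝕜 F] {f : (ι → 𝕜) → F} {s : Set ι}

theorem fderiv_apply_eq_zero (hf : DependsOn f s) (x : ι → 𝕜) {v : ι → 𝕜}
    (hv : ∀ i ∈ s, v i = 0) : fderiv 𝕜 f x v = 0 :=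
  fderiv_apply_eq_zero_of_forall_add_smul fun t => hf fun i hi => by simp [hv i hi]

theorem fderiv (hf : DependsOn f s) : DependsOn (fderiv 𝕜 f) s := by
  intro x y hxy
  have hy : y = x + (y - x) := by abel
  rw [hy, fderiv_add_eq_of_forall_add]
  intro u
  exact hf fun i hi => by simp [hxy i hi]

end DependsOn

def reachStep {ι : Type*} [DecidableEq ι] (supp : ι → Finset ι) (s : Finset ι) : Finset ι :=
  s ∪ s.biUnion supp

section Lie

variable {h : St → ℝ} {v : St → St}

theorem DependsOn.lie {supp : Fin 13 → Finset (Fin 13)}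
    (hv : ∀ i, DependsOn (fun x => v x i) ↑(supp i)) {s : Finset (Fin 13)}
    (hh : DependsOn h ↑s) : DependsOn (_root_.lie v h) ↑(reachStep supp s) := by
  intro x y hxy
  have hs : ∀ i ∈ s, x i = y i := fun i hi => hxy i (Finset.mem_union_left _ hi)
  rw [_root_.lie, _root_.lie, hh.fderiv hs, ← sub_eq_zero, ← map_sub]
  exact hh.fderiv_apply_eq_zero y fun i hi => sub_eq_zero.mpr <| hv i fun j hj =>
    hxy j (Finset.mem_union_right _ (Finset.mem_biUnion.mpr ⟨i, hi, hj⟩))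

theorem DependsOn.lieIt {supp : Fin 13 → Finset (Fin 13)}
    (hv : ∀ i, DependsOn (fun x => v x i) ↑(supp i)) {s : Finset (Fin 13)}
    (hh : DependsOn h ↑s) (k : ℕ) : DependsOn (lieIt v k h) ↑((reachStep supp)^[k] s) := by
  induction k with
  | zero => exact hh
  | succ k ih => rw [Function.iterate_succ_apply']; exact ih.lie hv

theorem DependsOn.lie_const_single_eq_zero {s : Set (Fin 13)} (hh : DependsOn h s)
    {j : Fin 13} (hj : j ∉ s) (c : ℝ) (x : St) : _root_.lie (fun _ => Pi.single j c) h x = 0 :=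
  hh.fderiv_apply_eq_zero (v := Pi.single j c) x fun i hi =>
    by simp [Pi.single_eq_of_ne (ne_of_mem_of_not_mem hi hj)]

end Lie

def driftSupport : Fin 13 → Finset (Fin 13) :=
  ![{0}, {0, 1}, {1, 2}, {3}, {3, 4}, {4, 5}, {7}, {2, 6, 7, 8}, {9}, {5, 6, 8, 9},
    {1, 4, 11}, {10, 11}, {1, 4}]

namespace Params

variable (p : Params)

theorem dependsOn_drift (i : Fin 13) : DependsOn (fun x => p.drift x i) ↑(driftSupport i) := by
  intro x y h
  fin_cases i <;> simp_all [driftSupport, drift, Pm1, Pm2, Pe1, Pe2, Qa1, Qa2]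

theorem dependsOn_hE : DependsOn p.hE ↑({6, 8} : Finset (Fin 13)) := by
  intro x y h
  simp_all [hE]

theorem dependsOn_hH : DependsOn p.hH ↑({11} : Finset (Fin 13)) := by
  intro x y h
  simp_all [hH]

theorem lie_inputs_eq_zero {φ : St → ℝ} {s : Finset (Fin 13)} (hφ : DependsOn φ ↑s)
    (h0 : 0 ∉ s) (h3 : 3 ∉ s) (x : St) : lie p.g1 φ x = 0 ∧ lie p.g2 φ x = 0 :=
  ⟨hφ.lie_const_single_eq_zero (Finset.mem_coe.not.mpr h0) _ x,
    hφ.lie_const_single_eq_zero (Finset.mem_coe.not.mpr h3) _ x⟩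

end Params

/-- first part of Lemma 2 of the paper. For the two-site
model, at every point of `X₊` and for `i = 1, 2`:
`L_{g_i} L_f^k h_e = 0` for `k = 0,…,3` and `L_{g_i} L_f^k h_h = 0` for
`k = 0,…,2`. -/
theorem two_site_relative_degree_lie_identities (p : Params) :
    ∀ x ∈ Xplus,
      (∀ k ≤ 3, lie p.g1 (lieIt p.drift k p.hE) x = 0 ∧
                lie p.g2 (lieIt p.drift k p.hE) x = 0) ∧
      (∀ k ≤ 2, lie p.g1 (lieIt p.drift k p.hH) x = 0 ∧
                lie p.g2 (lieIt p.drift k p.hH) x = 0) := by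
  intro x _
  refine ⟨fun k hk => p.lie_inputs_eq_zero (p.dependsOn_hE.lieIt p.dependsOn_drift k) ?_ ?_ x,
    fun k hk => p.lie_inputs_eq_zero (p.dependsOn_hH.lieIt p.dependsOn_drift k) ?_ ?_ x⟩
  all_goals interval_cases k <;> decide
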